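/- (Theorem 3.3) For every n ≥ 0, s_n = ∑_{k=0}^{⌊n/2⌋} C(n−k, n−2k) · d_{n−2k}. -/

import Mathlib

/-!
A Schröder half-path with `k` steps `H` has `n - k` steps. It is determined by its mask (which
of these steps are `H`) and by the word in `U`, `D` left after deleting the `H` steps, and every
mask with `k` marks together with every such word of length `n - 2k` arises. Since `H` has
height zero, the prefix sums of the path are those of the word, some of them repeated, so the
path is nonnegative exactly when the word is a Dyck half-path. Hence `C(n-k, k) d_{n-2k}` of
the paths have `k` steps `H`.
-/

/-- Value of a Dyck step: `true` is an up step (+1), `false` a down step (-1). -/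
def stepVal (b : Bool) : ℤ := if b then 1 else -1

/-- Partial sum of the first `i` steps of the word `w`. -/
def psum {n : ℕ} (w : Fin n → Bool) (i : ℕ) : ℤ :=
  ∑ j : Fin n, if (j : ℕ) < i then stepVal (w j) else 0

/-- `d n`: number of symmetric Dyck paths of length `2n`, encoded by their left half,
a word in `{+1,-1}^n` with all partial sums nonnegative. -/
noncomputable def d (n : ℕ) : ℕ := Set.ncard {w : Fin n → Bool | ∀ i ≤ n, 0 ≤ psum w i}

/-- Steps of a Schröder path: up `U`, down `D`, and the 2-horizontal step `H`. -/
inductive SStep | U | D | H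
deriving DecidableEq

/-- Width of a Schröder step. -/
def SStep.width : SStep → ℕ
  | .U => 1 | .D => 1 | .H => 2

/-- Height increment of a Schröder step. -/
def SStep.height : SStep → ℤ
  | .U => 1 | .D => -1 | .H => 0

/-- `s n`: number of symmetric Schröder paths of length `2n`, encoded by their left half,
a sequence of steps of total width `n` with all partial height sums nonnegative. -/
noncomputable def s (n : ℕ) : ℕ :=
  Set.ncard {l : List SStep | (l.map SStep.width).sum = n ∧
    ∀ i : ℕ, 0 ≤ ((l.take i).map SStep.height).sum}

theorem Set.ncard_eq_sum_ncard_fiberwise {α β : Type*} {S : Set α} (hS : S.Finite)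
    {f : α → β} {t : Finset β} (h : ∀ a ∈ S, f a ∈ t) :
    S.ncard = ∑ b ∈ t, {a ∈ S | f a = b}.ncard := by
  classical
  rw [Set.ncard_eq_toFinset_card S hS,
    Finset.card_eq_sum_card_fiberwise fun a ha => h a (hS.mem_toFinset.mp ha)]
  refine Finset.sum_congr rfl fun b _ => ?_
  rw [← Set.ncard_coe_finset]
  congr 1
  ext a
  simp

section PrefixNonneg

variable {α β : Type*}

def PrefixNonneg (f : α → ℤ) (l : List α) : Prop :=
  ∀ i : ℕ, 0 ≤ ((l.take i).map f).sum

variable {f : α → ℤ} {g : β → ℤ} {p : α → Option β}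

theorem PrefixNonneg.sum_nonneg {l : List α} (h : PrefixNonneg f l) : 0 ≤ (l.map f).sum := by
  simpa using h l.length

theorem prefixNonneg_append_singleton {l : List α} {a : α} :
    PrefixNonneg f (l ++ [a]) ↔ PrefixNonneg f l ∧ 0 ≤ ((l ++ [a]).map f).sum := by
  refine ⟨fun h => ⟨fun i => ?_, h.sum_nonneg⟩, fun ⟨hl, ha⟩ i => ?_⟩
  · rcases le_or_gt i l.length with hi | hi
    · simpa [List.take_append_of_le_length hi] using h i
    · simpa [List.take_of_length_le hi.le] using h l.length
  · rcases le_or_gt i l.length with hi | hi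
    · simpa [List.take_append_of_le_length hi] using hl i
    · rwa [List.take_of_length_le (by simp; omega)]

theorem sum_map_filterMap (hf : ∀ a, f a = ((p a).map g).getD 0) (l : List α) :
    ((l.filterMap p).map g).sum = (l.map f).sum := by
  induction l with
  | nil => rfl
  | cons a l ih => cases hp : p a <;> simp [hp, hf a, ih]

theorem prefixNonneg_filterMap_iff (hf : ∀ a, f a = ((p a).map g).getD 0) (l : List α) :
    PrefixNonneg g (l.filterMap p) ↔ PrefixNonneg f l := by
  induction l using List.reverseRecOn with
  | nil => simp [PrefixNonneg]
  | append_singleton l a ih =>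
    have hfa := hf a
    rw [prefixNonneg_append_singleton, List.filterMap_append, ← ih, List.map_append,
      List.sum_append, ← sum_map_filterMap hf]
    cases hp : p a with
    | none =>
      simp only [hp, Option.map_none, Option.getD_none] at hfa
      simpa [hp, hfa] using fun h => PrefixNonneg.sum_nonneg h
    | some b =>
      simp only [hp, Option.map_some, Option.getD_some] at hfa
      simp [hp, hfa, prefixNonneg_append_singleton]

end PrefixNonneg

theorem psum_eq_sum_take_ofFn {m : ℕ} (w : Fin m → Bool) (i : ℕ) :
    psum w i = (((List.ofFn w).take i).map stepVal).sum := by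
  rw [List.map_take, List.map_ofFn, List.sum_take_ofFn, psum, Finset.sum_filter]
  rfl

theorem d_eq_ncard (m : ℕ) :
    d m = {w : List Bool | w.length = m ∧ PrefixNonneg stepVal w}.ncard := by
  rw [d, ← Set.ncard_image_of_injective _ List.ofFn_injective]
  congr 1
  ext l
  constructor
  · rintro ⟨w, hw, rfl⟩
    refine ⟨List.length_ofFn, fun i => ?_⟩
    rcases le_or_gt i m with hi | hi
    · simpa [psum_eq_sum_take_ofFn] using hw i hi
    · rw [List.take_of_length_le (by simp; omega)]
      simpa [psum_eq_sum_take_ofFn, List.take_of_length_le] using hw m le_rfl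
  · rintro ⟨rfl, hl⟩
    exact ⟨l.get, fun i _ => by rw [psum_eq_sum_take_ofFn, List.ofFn_get]; exact hl i,
      List.ofFn_get l⟩

theorem ncard_setOf_length_count_true (L k : ℕ) :
    {c : List Bool | c.length = L ∧ c.count true = k}.ncard = L.choose k := by
  induction L generalizing k with
  | zero =>
    rcases k with _ | k
    · rw [Nat.choose_self]
      convert Set.ncard_singleton ([] : List Bool)
      ext c
      simp +contextual [List.length_eq_zero_iff]
    · rw [Nat.choose_zero_succ]
      convert Set.ncard_empty (List Bool)
      ext c
      simp +contextual [List.length_eq_zero_iff]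
  | succ L ih =>
    have hfin (k : ℕ) : {c : List Bool | c.length = L ∧ c.count true = k}.Finite :=
      (List.finite_length_eq Bool L).subset fun _ hc => hc.1
    rcases k with _ | k
    · have hzero : {c : List Bool | c.length = L + 1 ∧ c.count true = 0} =
          List.cons false '' {c | c.length = L ∧ c.count true = 0} := by
        ext (_ | ⟨_ | _, c⟩) <;> simp
      simp [hzero, Set.ncard_image_of_injective _ List.cons_injective, ih]
    · have hsucc : {c : List Bool | c.length = L + 1 ∧ c.count true = k + 1} =
          List.cons true '' {c | c.length = L ∧ c.count true = k} ∪
            List.cons false '' {c | c.length = L ∧ c.count true = k + 1} := by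
        ext (_ | ⟨_ | _, c⟩) <;> simp
      have hdisj : Disjoint (List.cons true '' {c | c.length = L ∧ c.count true = k})
          (List.cons false '' {c | c.length = L ∧ c.count true = k + 1}) :=
        Set.disjoint_left.mpr fun _ ⟨_, _, htrue⟩ ⟨_, _, hfalse⟩ => by
          cases htrue.trans hfalse.symm
      rw [hsucc, Set.ncard_union_eq hdisj ((hfin k).image _) ((hfin (k + 1)).image _),
        Set.ncard_image_of_injective _ List.cons_injective,
        Set.ncard_image_of_injective _ List.cons_injective, ih, ih, Nat.choose_succ_succ]

namespace SStep

instance : Fintype SStep where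
  elems := {U, D, H}
  complete x := by cases x <;> simp

def toDyck? : SStep → Option Bool
  | U => some true | D => some false | H => none

def ofDyck : Bool → SStep
  | true => U | false => D

def isH : SStep → Bool
  | H => true | _ => false

/-- Re-inserts the Dyck word `w` into the free slots (`false`) of the mask `c`, whose `true`
entries mark the `H` steps. -/
def merge : List Bool → List Bool → List SStep
  | [], _ => []
  | true :: c, w => H :: merge c w
  | false :: _, [] => []
  | false :: c, b :: w => ofDyck b :: merge c w

theorem height_eq (x : SStep) : x.height = ((toDyck? x).map stepVal).getD 0 := by
  cases x <;> rfl

theorem prefixNonneg_height_iff (l : List SStep) :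
    PrefixNonneg height l ↔ PrefixNonneg stepVal (l.filterMap toDyck?) :=
  (prefixNonneg_filterMap_iff height_eq l).symm

theorem sum_map_width (l : List SStep) : (l.map width).sum = l.length + l.count H := by
  induction l with
  | nil => rfl
  | cons x l ih => cases x <;> simp [width, ih] <;> omega

theorem length_filterMap_toDyck? (l : List SStep) :
    (l.filterMap toDyck?).length + l.count H = l.length := by
  induction l with
  | nil => rfl
  | cons x l ih => cases x <;> simp [toDyck?, List.filterMap_cons] <;> omega

theorem count_true_map_isH (l : List SStep) : (l.map isH).count true = l.count H := by
  induction l with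
  | nil => rfl
  | cons x l ih => cases x <;> simp [isH, ih]

theorem merge_map_isH_filterMap_toDyck? (l : List SStep) :
    merge (l.map isH) (l.filterMap toDyck?) = l := by
  induction l with
  | nil => rfl
  | cons x l ih => cases x <;> simp [isH, toDyck?, List.filterMap_cons, merge, ofDyck, ih]

theorem map_isH_merge : ∀ {c w : List Bool}, c.count false = w.length →
    (merge c w).map isH = c
  | [], _, _ => rfl
  | true :: c, w, h => by simp [merge, isH, map_isH_merge (by simpa using h)]
  | false :: c, [], h => by simp at h
  | false :: c, b :: w, h => by
    cases b <;> simp [merge, ofDyck, isH, map_isH_merge (by simpa using h)]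

theorem filterMap_toDyck?_merge : ∀ {c w : List Bool}, c.count false = w.length →
    (merge c w).filterMap toDyck? = w
  | [], w, h => (List.eq_nil_of_length_eq_zero h.symm).symm
  | true :: c, w, h => by
    simp [merge, toDyck?, List.filterMap_cons, filterMap_toDyck?_merge (by simpa using h)]
  | false :: c, [], h => by simp at h
  | false :: c, b :: w, h => by
    cases b <;> simp [merge, ofDyck, toDyck?, filterMap_toDyck?_merge (by simpa using h)]

theorem image_split_setOf_count_H (n k : ℕ) (hk : 2 * k ≤ n) :
    (fun l => (l.map isH, l.filterMap toDyck?)) ''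
        {l : List SStep | ((l.map width).sum = n ∧ PrefixNonneg height l) ∧ l.count H = k} =
      {c : List Bool | c.length = n - k ∧ c.count true = k} ×ˢ
        {w : List Bool | w.length = n - 2 * k ∧ PrefixNonneg stepVal w} := by
  ext ⟨c, w⟩
  constructor
  · rintro ⟨l, ⟨⟨hwidth, hl⟩, rfl⟩, hcw⟩
    obtain ⟨rfl, rfl⟩ := Prod.mk.inj hcw
    have := sum_map_width l
    have := length_filterMap_toDyck? l
    refine ⟨⟨?_, count_true_map_isH l⟩, ?_, (prefixNonneg_height_iff l).mp hl⟩
    all_goals simp only [List.length_map]; omega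
  · rintro ⟨⟨hc, hk⟩, hw, hwok⟩
    dsimp only at hc hk hw hwok
    subst hk
    have hcw : c.count false = w.length := by
      have := List.count_true_add_count_false c
      omega
    have hmask := map_isH_merge hcw
    have hlength : (merge c w).length = c.length := by rw [← List.length_map isH, hmask]
    have hcount : (merge c w).count H = c.count true := by rw [← count_true_map_isH, hmask]
    refine ⟨merge c w, ⟨⟨?_, ?_⟩, hcount⟩, by simp only [hmask, filterMap_toDyck?_merge hcw]⟩
    · rw [sum_map_width, hlength, hcount]
      omega
    · rwa [prefixNonneg_height_iff, filterMap_toDyck?_merge hcw]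

theorem ncard_setOf_count_H (n k : ℕ) (hk : 2 * k ≤ n) :
    {l : List SStep | ((l.map width).sum = n ∧ PrefixNonneg height l) ∧ l.count H = k}.ncard =
      (n - k).choose k * d (n - 2 * k) := by
  rw [d_eq_ncard, ← ncard_setOf_length_count_true, ← Set.ncard_prod,
    ← image_split_setOf_count_H n k hk, Set.ncard_image_of_injective]
  exact Function.LeftInverse.injective (g := fun p : List Bool × List Bool => merge p.1 p.2)
    merge_map_isH_filterMap_toDyck?

end SStep

/-- **Theorem 3.3.** `s_n = ∑_{k=0}^{⌊n/2⌋} C(n-k, n-2k) d_{n-2k}`. -/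
theorem schroeder_eq_sum_dyck (n : ℕ) :
    s n = ∑ k ∈ Finset.range (n / 2 + 1),
      Nat.choose (n - k) (n - 2 * k) * d (n - 2 * k) := by
  set S := {l : List SStep | (l.map SStep.width).sum = n ∧ PrefixNonneg SStep.height l}
  have hfinite : S.Finite := (List.finite_length_le SStep n).subset fun l ⟨hl, _⟩ => by
    have := SStep.sum_map_width l
    simp only [Set.mem_ofPred_eq]
    omega
  have hcount_H : ∀ l ∈ S, l.count .H ∈ Finset.range (n / 2 + 1) := fun l ⟨hl, _⟩ => by
    have := SStep.sum_map_width l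
    have := List.count_le_length (a := SStep.H) (l := l)
    rw [Finset.mem_range]
    omega
  rw [show s n = S.ncard from rfl, Set.ncard_eq_sum_ncard_fiberwise hfinite hcount_H]
  refine Finset.sum_congr rfl fun k hk => ?_
  have hk : 2 * k ≤ n := by
    rw [Finset.mem_range] at hk
    omega
  refine (SStep.ncard_setOf_count_H n k hk).trans ?_
  rw [← Nat.choose_symm (by omega), show n - k - k = n - 2 * k by omega]
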